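/- For any real λ ≠ 0, there exists a transcendental real number α > 1 such that (λα^n) is not uniformly distributed modulo 1. -/

import Mathlib

/-!
Put `μ = |λ|`. For `m ≥ 0` the `x ≥ 0` with `μ x ^ n ∈ [m + 1/8, m + 3/8]` form an interval
`[a, b]` with `μ (b ^ n - a ^ n) = 1/4`; once `a ≥ 12`, the numbers `μ x ^ (n + 1)`, `x ∈ [a, b]`,
fill an interval of length at least `a/4 ≥ 3`, which contains two such windows of level `n + 1`.
Nesting these choices gives a Cantor set of `α > 1` with `μ α ^ n ∈ [1/8, 3/8] mod 1` for all
`n ≥ 1`. It is uncountable, hence contains a transcendental `α`; and with `h = sign λ` every term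
of the Weyl sum for `h` has imaginary part `sin (2π μ α ^ n) ≥ √2/2`, so the averages stay away
from `0`.
-/

open Filter

/-- A sequence of real numbers is uniformly distributed modulo 1 (Weyl's criterion). -/
def UDMod1 (x : ℕ → ℝ) : Prop :=
  ∀ h : ℤ, h ≠ 0 →
    Tendsto (fun N : ℕ => (N : ℂ)⁻¹ * ∑ n ∈ Finset.Icc 1 N,
      Complex.exp (2 * Real.pi * Complex.I * h * x n)) atTop (nhds 0)

open Set Real

section BinarySplitting

variable {X : Type*}

def binaryBranch (K₀ : Set X) (s : ℕ → Bool → Set X → Set X) (g : ℕ → Bool) : ℕ → Set X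
  | 0 => K₀
  | n + 1 => s n (g n) (binaryBranch K₀ s g n)

variable {𝒦 : ℕ → Set (Set X)} {K₀ : Set X} {s : ℕ → Bool → Set X → Set X}

lemma binaryBranch_mem (h₀ : K₀ ∈ 𝒦 0) (hs : ∀ n b, ∀ K ∈ 𝒦 n, s n b K ∈ 𝒦 (n + 1))
    (g : ℕ → Bool) : ∀ n, binaryBranch K₀ s g n ∈ 𝒦 n
  | 0 => h₀
  | n + 1 => hs n (g n) _ (binaryBranch_mem h₀ hs g n)

lemma binaryBranch_congr {g g' : ℕ → Bool} :
    ∀ {n}, (∀ k < n, g k = g' k) → binaryBranch K₀ s g n = binaryBranch K₀ s g' n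
  | 0, _ => rfl
  | n + 1, h => by
    rw [binaryBranch, binaryBranch, h n n.lt_succ_self,
      binaryBranch_congr fun k hk => h k (hk.trans n.lt_succ_self)]

lemma disjoint_binaryBranch_succ (h₀ : K₀ ∈ 𝒦 0)
    (hs : ∀ n b, ∀ K ∈ 𝒦 n, s n b K ∈ 𝒦 (n + 1))
    (hdisj : ∀ n, ∀ K ∈ 𝒦 n, Disjoint (s n true K) (s n false K)) {g g' : ℕ → Bool} {n : ℕ}
    (hagree : ∀ k < n, g k = g' k) (hne : g n ≠ g' n) :
    Disjoint (binaryBranch K₀ s g (n + 1)) (binaryBranch K₀ s g' (n + 1)) := by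
  have hK := hdisj n _ (binaryBranch_mem h₀ hs g n)
  rw [binaryBranch, binaryBranch, ← binaryBranch_congr hagree]
  revert hne
  cases g n <;> cases g' n <;> intro hne
  exacts [absurd rfl hne, hK.symm, hK, absurd rfl hne]

end BinarySplitting

lemma not_countable_nat_bool : ¬ Countable (ℕ → Bool) := by
  rw [← Cardinal.mk_le_aleph0_iff, not_le]
  simpa using Cardinal.aleph0_lt_continuum

theorem not_countable_of_binary_splitting {X : Type*} [TopologicalSpace X] [T2Space X]
    (𝒦 : ℕ → Set (Set X)) (h𝒦 : ∀ n, ∀ K ∈ 𝒦 n, IsCompact K ∧ K.Nonempty) (h₀ : (𝒦 0).Nonempty)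
    (hsplit : ∀ n, ∀ K ∈ 𝒦 n, ∃ K₁ ∈ 𝒦 (n + 1), ∃ K₂ ∈ 𝒦 (n + 1),
      K₁ ⊆ K ∧ K₂ ⊆ K ∧ Disjoint K₁ K₂) :
    ¬ {x | ∀ n, ∃ K ∈ 𝒦 n, x ∈ K}.Countable := by
  choose! K₁ hK₁ K₂ hK₂ hsub₁ hsub₂ hdisj using hsplit
  obtain ⟨K₀, hK₀⟩ := h₀
  set s : ℕ → Bool → Set X → Set X := fun n b K => bif b then K₁ n K else K₂ n K
  have hs : ∀ n b, ∀ K ∈ 𝒦 n, s n b K ∈ 𝒦 (n + 1) := by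
    rintro n (_ | _) K hK
    exacts [hK₂ n K hK, hK₁ n K hK]
  have hsub : ∀ n b, ∀ K ∈ 𝒦 n, s n b K ⊆ K := by
    rintro n (_ | _) K hK
    exacts [hsub₂ n K hK, hsub₁ n K hK]
  have hmem := binaryBranch_mem hK₀ hs
  have hnonempty (g : ℕ → Bool) : (⋂ n, binaryBranch K₀ s g n).Nonempty :=
    IsCompact.nonempty_iInter_of_sequence_nonempty_isCompact_isClosed _
      (fun n => hsub n _ _ (hmem g n)) (fun n => (h𝒦 n _ (hmem g n)).2) (h𝒦 0 _ hK₀).1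
      (fun n => (h𝒦 n _ (hmem g n)).1.isClosed)
  choose p hp using hnonempty
  have hp_mem (g : ℕ → Bool) (n : ℕ) : p g ∈ binaryBranch K₀ s g n := mem_iInter.1 (hp g) n
  have hp_inj : Function.Injective p := fun g g' hgg' => by_contra fun hne =>
    (disjoint_binaryBranch_succ hK₀ hs hdisj (fun _ => PiNat.apply_eq_of_lt_firstDiff)
      (PiNat.apply_firstDiff_ne hne)).ne_of_mem (hp_mem g _) (hp_mem g' _) hgg'
  intro hcount
  refine not_countable_nat_bool
    (countable_univ_iff.1 (MapsTo.countable_of_injOn ?_ hp_inj.injOn hcount))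
  exact fun g _ n => ⟨_, hmem g n, hp_mem g n⟩

section PowWindow

variable {μ : ℝ} {n : ℕ}

noncomputable def scaledRoot (μ : ℝ) (n : ℕ) (y : ℝ) : ℝ := (y / μ) ^ ((n : ℝ)⁻¹)

lemma scaledRoot_nonneg (hμ : 0 ≤ μ) {y : ℝ} (hy : 0 ≤ y) : 0 ≤ scaledRoot μ n y :=
  Real.rpow_nonneg (div_nonneg hy hμ) _

lemma mul_scaledRoot_pow (hμ : 0 < μ) (hn : n ≠ 0) {y : ℝ} (hy : 0 ≤ y) :
    μ * scaledRoot μ n y ^ n = y := by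
  rw [scaledRoot, Real.rpow_inv_natCast_pow (div_nonneg hy hμ.le) hn, mul_div_cancel₀ _ hμ.ne']

lemma le_scaledRoot_iff (hμ : 0 < μ) (hn : n ≠ 0) {x y : ℝ} (hx : 0 ≤ x) (hy : 0 ≤ y) :
    x ≤ scaledRoot μ n y ↔ μ * x ^ n ≤ y := by
  conv_rhs => rw [← mul_scaledRoot_pow hμ hn hy]
  rw [mul_le_mul_iff_right₀ hμ, pow_le_pow_iff_left₀ hx (scaledRoot_nonneg hμ.le hy) hn]

lemma scaledRoot_le_iff (hμ : 0 < μ) (hn : n ≠ 0) {x y : ℝ} (hx : 0 ≤ x) (hy : 0 ≤ y) :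
    scaledRoot μ n y ≤ x ↔ y ≤ μ * x ^ n := by
  conv_rhs => rw [← mul_scaledRoot_pow hμ hn hy]
  rw [mul_le_mul_iff_right₀ hμ, pow_le_pow_iff_left₀ (scaledRoot_nonneg hμ.le hy) hx hn]

def powWindow (μ : ℝ) (n : ℕ) (m : ℤ) : Set ℝ :=
  Icc (scaledRoot μ n (m + 1/8)) (scaledRoot μ n (m + 3/8))

variable {m : ℤ}

lemma powWindow_nonempty (hμ : 0 < μ) (hn : n ≠ 0) (hm : 0 ≤ m) : (powWindow μ n m).Nonempty := by
  have hm' : (0 : ℝ) ≤ m := by exact_mod_cast hm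
  refine nonempty_Icc.2 ((scaledRoot_le_iff hμ hn (scaledRoot_nonneg hμ.le (by positivity))
    (by positivity)).2 ?_)
  rw [mul_scaledRoot_pow hμ hn (by positivity)]
  linarith

lemma mul_pow_mem_Icc_of_mem_powWindow (hμ : 0 < μ) (hn : n ≠ 0) (hm : 0 ≤ m) {x : ℝ}
    (hx : x ∈ powWindow μ n m) : μ * x ^ n ∈ Icc (m + 1/8 : ℝ) (m + 3/8) := by
  have hm' : (0 : ℝ) ≤ m := by exact_mod_cast hm
  have hx₀ : 0 ≤ x := (scaledRoot_nonneg hμ.le (by positivity)).trans hx.1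
  exact ⟨(scaledRoot_le_iff hμ hn hx₀ (by positivity)).1 hx.1,
    (le_scaledRoot_iff hμ hn hx₀ (by positivity)).1 hx.2⟩

lemma floor_mul_pow_of_mem_powWindow (hμ : 0 < μ) (hn : n ≠ 0) (hm : 0 ≤ m) {x : ℝ}
    (hx : x ∈ powWindow μ n m) : ⌊μ * x ^ n⌋ = m := by
  have := mul_pow_mem_Icc_of_mem_powWindow hμ hn hm hx
  rw [Int.floor_eq_iff]
  constructor <;> linarith [this.1, this.2]

lemma fract_mul_pow_mem_Icc_of_mem_powWindow (hμ : 0 < μ) (hn : n ≠ 0) (hm : 0 ≤ m) {x : ℝ}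
    (hx : x ∈ powWindow μ n m) : Int.fract (μ * x ^ n) ∈ Icc (1/8 : ℝ) (3/8) := by
  have := mul_pow_mem_Icc_of_mem_powWindow hμ hn hm hx
  rw [Int.fract, floor_mul_pow_of_mem_powWindow hμ hn hm hx]
  constructor <;> linarith [this.1, this.2]

lemma disjoint_powWindow (hμ : 0 < μ) (hn : n ≠ 0) {m m' : ℤ} (hm : 0 ≤ m) (hm' : 0 ≤ m')
    (hne : m ≠ m') : Disjoint (powWindow μ n m) (powWindow μ n m') :=
  Set.disjoint_left.2 fun _ hx hx' => hne <|
    (floor_mul_pow_of_mem_powWindow hμ hn hm hx).symm.trans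
      (floor_mul_pow_of_mem_powWindow hμ hn hm' hx')

lemma powWindow_subset_Icc (hμ : 0 < μ) (hn : n ≠ 0) (hm : 0 ≤ m) {a b : ℝ} (ha : 0 ≤ a)
    (hb : 0 ≤ b) (hma : μ * a ^ n ≤ m + 1/8) (hmb : m + 3/8 ≤ μ * b ^ n) :
    powWindow μ n m ⊆ Icc a b := by
  have hm' : (0 : ℝ) ≤ m := by exact_mod_cast hm
  exact Icc_subset_Icc ((le_scaledRoot_iff hμ hn ha (by positivity)).2 hma)
    ((scaledRoot_le_iff hμ hn hb (by positivity)).2 hmb)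

lemma mul_sub_pow_le_pow_succ_sub {a b : ℝ} (ha : 0 ≤ a) (hab : a ≤ b) :
    a * (b ^ n - a ^ n) ≤ b ^ (n + 1) - a ^ (n + 1) := by
  have : a * b ^ n ≤ b * b ^ n := mul_le_mul_of_nonneg_right hab (pow_nonneg (ha.trans hab) n)
  rw [pow_succ', pow_succ']
  linarith

end PowWindow

section BadlyDistributed

variable {μ : ℝ} {n : ℕ} {m : ℤ}

lemma exists_powWindow_succ_pair_subset (hμ : 0 < μ) (hn : n ≠ 0) (hm : μ * 12 ^ n ≤ m) :
    ∃ m' : ℤ, μ * 12 ^ (n + 1) ≤ m' ∧ powWindow μ (n + 1) m' ⊆ powWindow μ n m ∧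
      powWindow μ (n + 1) (m' + 1) ⊆ powWindow μ n m := by
  have hm₀ : (0 : ℝ) ≤ m := le_trans (by positivity) hm
  set a := scaledRoot μ n (m + 1/8)
  set b := scaledRoot μ n (m + 3/8)
  have ha : 12 ≤ a := (le_scaledRoot_iff hμ hn (by norm_num) (by positivity)).2 (by linarith)
  have hab : a ≤ b := nonempty_Icc.1 (powWindow_nonempty hμ hn (by exact_mod_cast hm₀))
  -- `μ (b ^ n - a ^ n) = 1/4`, so `μ (b ^ (n + 1) - a ^ (n + 1)) ≥ a/4 ≥ 3`
  have hwidth : μ * a ^ (n + 1) + 3 ≤ μ * b ^ (n + 1) := by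
    have hstep := mul_sub_pow_le_pow_succ_sub (n := n) (by linarith) hab
    have hb := mul_scaledRoot_pow hμ hn (y := m + 3/8) (by positivity)
    have ha' := mul_scaledRoot_pow hμ hn (y := m + 1/8) (by positivity)
    nlinarith
  set c := μ * a ^ (n + 1)
  have hc : μ * 12 ^ (n + 1) ≤ c :=
    mul_le_mul_of_nonneg_left (pow_le_pow_left₀ (by norm_num) ha _) hμ.le
  have hc₀ : 0 ≤ ⌈c⌉ := Int.ceil_nonneg (le_trans (by positivity) hc)
  have hceil := Int.ceil_lt_add_one c
  refine ⟨⌈c⌉, hc.trans (Int.le_ceil c), ?_, ?_⟩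
  · exact powWindow_subset_Icc hμ n.add_one_ne_zero hc₀ (by linarith) (by linarith)
      (by linarith [Int.le_ceil c]) (by linarith)
  · exact powWindow_subset_Icc hμ n.add_one_ne_zero (by omega) (by linarith) (by linarith)
      (by push_cast; linarith [Int.le_ceil c]) (by push_cast; linarith)

theorem not_countable_setOf_fract_mul_pow_mem_Icc (hμ : 0 < μ) :
    ¬ {α : ℝ | 1 < α ∧ ∀ n ≥ 1, Int.fract (μ * α ^ n) ∈ Icc (1/8 : ℝ) (3/8)}.Countable := by
  set 𝒦 : ℕ → Set (Set ℝ) := fun n => powWindow μ (n + 1) '' {m : ℤ | μ * 12 ^ (n + 1) ≤ m}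
  have hm₀ {n : ℕ} {m : ℤ} (hm : μ * 12 ^ (n + 1) ≤ m) : 0 ≤ m := by
    have : (0 : ℝ) ≤ m := le_trans (by positivity) hm
    exact_mod_cast this
  refine fun hcount => not_countable_of_binary_splitting 𝒦 ?_ ?_ ?_ (hcount.mono ?_)
  · rintro n _ ⟨m, hm, rfl⟩
    exact ⟨isCompact_Icc, powWindow_nonempty hμ n.add_one_ne_zero (hm₀ hm)⟩
  · exact ⟨_, ⌈μ * 12⌉, by simpa using Int.le_ceil (μ * 12), rfl⟩
  · rintro n _ ⟨m, hm, rfl⟩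
    obtain ⟨m', hm', h₁, h₂⟩ := exists_powWindow_succ_pair_subset hμ n.add_one_ne_zero hm
    have hm'' : μ * 12 ^ (n + 1 + 1) ≤ ((m' + 1 : ℤ) : ℝ) := by push_cast; linarith
    exact ⟨_, ⟨m', hm', rfl⟩, _, ⟨m' + 1, hm'', rfl⟩, h₁, h₂,
      disjoint_powWindow hμ (by omega) (hm₀ hm') (hm₀ hm'') (by omega)⟩
  · intro x hx
    refine ⟨?_, fun n hn => ?_⟩
    · obtain ⟨_, ⟨m, hm, rfl⟩, hxK⟩ := hx 0
      have hm : μ * 12 ≤ m := by simpa using hm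
      have := (le_scaledRoot_iff hμ one_ne_zero (by norm_num) (by linarith)).2
        (show μ * 12 ^ 1 ≤ m + 1/8 by linarith)
      linarith [hxK.1]
    · obtain ⟨k, rfl⟩ := Nat.exists_eq_add_of_le' hn
      obtain ⟨_, ⟨m, hm, rfl⟩, hxK⟩ := hx k
      exact fract_mul_pow_mem_Icc_of_mem_powWindow hμ k.add_one_ne_zero (hm₀ hm) hxK

end BadlyDistributed

lemma sqrt_two_div_two_le_sin_two_pi_mul {t : ℝ} (ht : Int.fract t ∈ Icc (1/8 : ℝ) (3/8)) :
    √2 / 2 ≤ sin (2 * π * t) := by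
  have hsin : sin (2 * π * t) = cos (2 * π * Int.fract t - π / 2) := by
    rw [cos_sub_pi_div_two, Int.fract, ← sin_sub_int_mul_two_pi _ ⌊t⌋]
    ring_nf
  rw [hsin, ← cos_abs, ← cos_pi_div_four]
  refine cos_le_cos_of_nonneg_of_le_pi (abs_nonneg _) (by linarith [pi_pos]) ?_
  rw [abs_le]
  constructor <;> nlinarith [pi_pos, ht.1, ht.2]

lemma not_udMod1_of_le_sin {x : ℕ → ℝ} {h : ℤ} (hh : h ≠ 0) {c : ℝ} (hc : 0 < c)
    (hx : ∀ n ≥ 1, c ≤ sin (2 * π * h * x n)) : ¬ UDMod1 x := by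
  intro hud
  have him (N : ℕ) :
      ((N : ℂ)⁻¹ * ∑ n ∈ Finset.Icc 1 N, Complex.exp (2 * π * Complex.I * h * x n)).im =
        (N : ℝ)⁻¹ * ∑ n ∈ Finset.Icc 1 N, sin (2 * π * h * x n) := by
    rw [← Complex.ofReal_natCast, ← Complex.ofReal_inv, Complex.im_ofReal_mul, Complex.im_sum]
    congr 1
    refine Finset.sum_congr rfl fun n _ => ?_
    rw [← Complex.exp_ofReal_mul_I_im]
    push_cast
    ring_nf
  have hmean : ∀ N : ℕ, 1 ≤ N → c ≤ (N : ℝ)⁻¹ * ∑ n ∈ Finset.Icc 1 N, sin (2 * π * h * x n) := by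
    intro N hN
    have hsum := Finset.card_nsmul_le_sum (Finset.Icc 1 N) (fun n => sin (2 * π * h * x n)) c
      fun n hn => hx n (Finset.mem_Icc.1 hn).1
    rw [Nat.card_Icc, add_tsub_cancel_right, nsmul_eq_mul] at hsum
    rwa [le_inv_mul_iff₀ (by positivity)]
  have htend := (Complex.continuous_im.tendsto 0).comp (hud h hh)
  simp only [Function.comp_def, him, Complex.zero_im] at htend
  exact hc.not_ge (ge_of_tendsto htend (eventually_atTop.2 ⟨1, hmean⟩))

lemma exists_transcendental_mem_of_not_countable {R A : Type*} [CommRing R] [IsDomain R]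
    [Countable R] [CommRing A] [IsDomain A] [Algebra R A] [Module.IsTorsionFree R A]
    {S : Set A} (hS : ¬ S.Countable) : ∃ x ∈ S, Transcendental R x := by
  by_contra! h
  exact hS ((Algebraic.countable R A).mono fun x hx => not_not.1 (h x hx))

theorem exists_transcendental_badly_distributed (lam : ℝ) (hlam : lam ≠ 0) :
    ∃ α : ℝ, 1 < α ∧ Transcendental ℚ α ∧ ¬ UDMod1 (fun n => lam * α ^ n) := by
  obtain ⟨α, ⟨hα, hfract⟩, htrans⟩ := exists_transcendental_mem_of_not_countable (R := ℚ)
    (not_countable_setOf_fract_mul_pow_mem_Icc (abs_pos.2 hlam))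
  obtain ⟨h, hh, hhlam⟩ : ∃ h : ℤ, h ≠ 0 ∧ (h : ℝ) * lam = |lam| := by
    rcases hlam.lt_or_gt with hneg | hpos
    · exact ⟨-1, by norm_num, by simp [abs_of_neg hneg]⟩
    · exact ⟨1, one_ne_zero, by simp [abs_of_pos hpos]⟩
  refine ⟨α, hα, htrans, not_udMod1_of_le_sin hh (c := √2 / 2) (by positivity) fun n hn => ?_⟩
  rw [mul_assoc _ (h : ℝ), ← mul_assoc (h : ℝ), hhlam]
  exact sqrt_two_div_two_le_sin_two_pi_mul (hfract n hn)
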